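/- arXiv:1204.5537 — 7 statements merged into one kernel-verified Lean document; each statement's English description precedes it below -/
import Mathlib

section
/- A non-negative integer vector (b_k,...,b_1) belongs to Ξ_k if and only if there exists a unique index k* ∈ {1,...,k} such that: (c1) b_k + ... + b_{k'} + k' < k+1 for all k' with k ≥ k' > k*; (c2) b_k + ... + b_{k*} + k* = k+1; (c3) b_k + ... + b_{k'} + k' < k+1 for all k' with k* > k' ≥ 1; and (c4) b_{k*-1} = b_{k*-2} = ... = b_1 = 0. -/
/-!
Write `f j = b_k + ⋯ + b_j + j`, so that `f (k + 1) = k + 1` and the truncation `(b_m, …, b_1)`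
lies in `Ξ̂_m` exactly when `f (m + 1)` dominates `f` on `[1, m]` and some `b_j` with `j ≤ m` is
nonzero. For `b ∈ Ξ_k` the apex `k*` is the largest `j ≤ k` with `f j = k + 1`. It exists, since
otherwise `f k = k` and the truncation to `k - 1` lies in `Ξ̂_{k-1}`; and `b` vanishes below `k*`,
since otherwise the truncation to `k* - 1` lies in `Ξ̂_{k*-1}`. Conversely, an apex excludes every
truncation: one at or above `k*` by (c1), one below `k*` by (c4).
-/

open Finset

/-- `sumFrom b k'` is `b_k + b_{k-1} + ⋯ + b_{k'}`, where the `Fin k`-index `j`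
encodes the subscript `j+1` (so `b ⟨0,_⟩ = b₁`, …, `b ⟨k-1,_⟩ = b_k`). -/
def sumFrom {k : ℕ} (b : Fin k → ℕ) (k' : ℕ) : ℕ :=
  ∑ ℓ : Fin k, if k' ≤ ℓ.val + 1 then b ℓ else 0

/-- The set `Ξ̂_k` of non-negative integer vectors `(b_k, …, b_1)` with
`b_k + ⋯ + b_{k'} + k' ≤ k + 1` for all `1 ≤ k' ≤ k` and total sum at least `1`. -/
def XiHat (k : ℕ) : Set (Fin k → ℕ) :=
  {b | (∀ k', 1 ≤ k' → k' ≤ k → sumFrom b k' + k' ≤ k + 1) ∧ 1 ≤ ∑ ℓ, b ℓ}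

/-- `Ξ_k`: vectors of `Ξ̂_k` having no proper left truncated subvector
`(b_{k'}, …, b_1)` in `Ξ̂_{k'}` for any `k' < k`. -/
def Xi (k : ℕ) : Set (Fin k → ℕ) :=
  {b | b ∈ XiHat k ∧
    ∀ k' (h : k' < k), (fun j : Fin k' => b (Fin.castLE h.le j)) ∉ XiHat k'}

section
variable {k : ℕ} (b : Fin k → ℕ)

theorem sumFrom_one : sumFrom b 1 = ∑ ℓ, b ℓ :=
  Finset.sum_congr rfl fun ℓ _ => if_pos (by omega)

theorem sumFrom_castLE_add_sumFrom {m j : ℕ} (h : m ≤ k) (hj : j ≤ m + 1) :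
    sumFrom (fun i : Fin m => b (Fin.castLE h i)) j + sumFrom b (m + 1) = sumFrom b j := by
  obtain ⟨n, rfl⟩ := Nat.exists_eq_add_of_le h
  simp only [sumFrom, Fin.sum_univ_add]
  have hlow (x : Fin m) : ¬ m ≤ x.val := by omega
  have hhigh (x : Fin n) : j ≤ m + x.val + 1 := by omega
  simp [hlow, hhigh, Fin.castLE, Fin.castAdd]

variable {b} in
theorem sumFrom_lt_sumFrom_of_ne_zero {ℓ : Fin k} (hℓ : b ℓ ≠ 0) {i j : ℕ} (hi : i ≤ ℓ + 1)
    (hj : ℓ + 1 < j) : sumFrom b j < sumFrom b i := by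
  refine Finset.sum_lt_sum (fun l _ => ?_) ⟨ℓ, Finset.mem_univ _, ?_⟩
  · split_ifs <;> omega
  · rw [if_neg (by omega), if_pos hi]; omega

theorem sumFrom_eq_sumFrom_of_eq_zero {i j : ℕ} (hij : i ≤ j)
    (hb : ∀ ℓ : Fin k, i ≤ ℓ + 1 → ℓ + 1 < j → b ℓ = 0) : sumFrom b i = sumFrom b j := by
  refine Finset.sum_congr rfl fun ℓ _ => ?_
  by_cases h : ℓ + 1 < j
  · rw [if_neg (show ¬ j ≤ ℓ + 1 by omega)]
    split_ifs with hi
    exacts [hb ℓ hi h, rfl]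
  · rw [if_pos (by omega), if_pos (by omega)]

theorem castLE_mem_XiHat_iff {m : ℕ} (h : m ≤ k) :
    (fun i : Fin m => b (Fin.castLE h i)) ∈ XiHat m ↔
      (∀ j, 1 ≤ j → j ≤ m → sumFrom b j + j ≤ sumFrom b (m + 1) + (m + 1)) ∧
        sumFrom b (m + 1) < sumFrom b 1 := by
  have hsplit {j : ℕ} (hj : j ≤ m + 1) := sumFrom_castLE_add_sumFrom b h hj
  simp only [XiHat, Set.mem_ofPred_eq, ← sumFrom_one]
  refine and_congr
    (forall_congr' fun j => imp_congr_right fun _ => imp_congr_right fun hjm => ?_) ?_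
  · have := hsplit (j := j) (by omega)
    omega
  · have := hsplit (j := 1) (by omega)
    omega

def IsApex (ks : ℕ) : Prop :=
  1 ≤ ks ∧ ks ≤ k ∧
    (∀ k', ks < k' → k' ≤ k → sumFrom b k' + k' < k + 1) ∧
    sumFrom b ks + ks = k + 1 ∧
    (∀ k', 1 ≤ k' → k' < ks → sumFrom b k' + k' < k + 1) ∧
    (∀ j : Fin k, j.val + 1 < ks → b j = 0)

variable {b}

theorem IsApex.unique {i j : ℕ} (hi : IsApex b i) (hj : IsApex b j) : i = j := by
  obtain ⟨hi₁, hik, hi_above, hi_eq, hi_below, -⟩ := hi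
  obtain ⟨hj₁, hjk, -, hj_eq, -, -⟩ := hj
  rcases Nat.lt_trichotomy i j with h | h | h
  · have := hi_above j h hjk; omega
  · exact h
  · have := hi_below j hj₁ h; omega

theorem exists_sumFrom_add_eq_of_mem_Xi (hk : 1 ≤ k) (hb : b ∈ Xi k) :
    ∃ j, 1 ≤ j ∧ j ≤ k ∧ sumFrom b j + j = k + 1 := by
  obtain ⟨⟨hle, hpos⟩, hnot⟩ := hb
  by_contra! hne
  have hlt (j : ℕ) (hj₁ : 1 ≤ j) (hjk : j ≤ k) : sumFrom b j + j ≤ k :=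
    Nat.le_of_lt_succ (lt_of_le_of_ne (hle j hj₁ hjk) (hne j hj₁ hjk))
  have hk_zero : sumFrom b k = 0 := by have := hlt k hk le_rfl; omega
  refine hnot (k - 1) (by omega) ((castLE_mem_XiHat_iff b _).2 ⟨fun j hj₁ hjk => ?_, ?_⟩)
  · have := hlt j hj₁ (by omega)
    rw [Nat.sub_add_cancel hk]
    omega
  · rw [Nat.sub_add_cancel hk, hk_zero, sumFrom_one]
    exact hpos

theorem exists_isApex_of_mem_Xi (hk : 1 ≤ k) (hb : b ∈ Xi k) : ∃ ks, IsApex b ks := by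
  obtain ⟨j₀, hj₀, hj₀k, hj₀_eq⟩ := exists_sumFrom_add_eq_of_mem_Xi hk hb
  obtain ⟨⟨hle, -⟩, hnot⟩ := hb
  set ks := Nat.findGreatest (fun j => sumFrom b j + j = k + 1) k
  have hks₁ : 1 ≤ ks := hj₀.trans (Nat.le_findGreatest hj₀k hj₀_eq)
  have hksk : ks ≤ k := Nat.findGreatest_le k
  have hks_eq : sumFrom b ks + ks = k + 1 :=
    Nat.findGreatest_spec (P := fun j => sumFrom b j + j = k + 1) hj₀k hj₀_eq
  have hzero (ℓ : Fin k) (hℓ : ℓ.val + 1 < ks) : b ℓ = 0 := by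
    by_contra hne
    refine hnot (ks - 1) (by omega) ((castLE_mem_XiHat_iff b _).2 ⟨fun j hj₁ hjk => ?_, ?_⟩)
    · have := hle j hj₁ (by omega)
      rw [Nat.sub_add_cancel hks₁]
      omega
    · rw [Nat.sub_add_cancel hks₁]
      exact sumFrom_lt_sumFrom_of_ne_zero hne (by omega) hℓ
  refine ⟨ks, hks₁, hksk, fun j hj hjk => ?_, hks_eq, fun j hj₁ hj => ?_, hzero⟩
  · have := hle j (by omega) hjk
    have := Nat.findGreatest_is_greatest hj hjk
    omega
  · have := sumFrom_eq_sumFrom_of_eq_zero b hj.le fun ℓ _ hℓ => hzero ℓ hℓ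
    omega

theorem mem_Xi_of_isApex {ks : ℕ} (h : IsApex b ks) : b ∈ Xi k := by
  obtain ⟨hks₁, hksk, h_above, h_eq, h_below, hzero⟩ := h
  have hflat {j : ℕ} (hj : j ≤ ks) : sumFrom b j = sumFrom b ks :=
    sumFrom_eq_sumFrom_of_eq_zero b hj fun ℓ _ hℓ => hzero ℓ hℓ
  refine ⟨⟨fun j hj₁ hjk => ?_, ?_⟩, fun m hm hmem => ?_⟩
  · rcases Nat.lt_trichotomy j ks with h | rfl | h
    · exact (h_below j hj₁ h).le
    · exact h_eq.le
    · exact (h_above j h hjk).le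
  · rw [← sumFrom_one, hflat hks₁]
    omega
  · obtain ⟨hle, hlt⟩ := (castLE_mem_XiHat_iff b hm.le).1 hmem
    rcases le_or_gt ks m with h | h
    · have := hle ks hks₁ h
      have := h_above (m + 1) (by omega) hm
      omega
    · have := hflat (j := 1) hks₁
      have := hflat (j := m + 1) h
      omega

end

/-- A non-negative integer vector `(b_k, …, b_1)` belongs to `Ξ_k` iff there is a
unique index `k* ∈ {1,…,k}` with:
(c1) `b_k + ⋯ + b_{k'} + k' < k+1` for all `k ≥ k' > k*`,
(c2) `b_k + ⋯ + b_{k*} + k* = k+1`,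
(c3) `b_k + ⋯ + b_{k'} + k' < k+1` for all `k* > k' ≥ 1`,
(c4) `b_{k*-1} = ⋯ = b_1 = 0`. -/
theorem mem_Xi_iff_exists_unique_apex (k : ℕ) (hk : 1 ≤ k) (b : Fin k → ℕ) :
    b ∈ Xi k ↔
      ∃! ks : ℕ, 1 ≤ ks ∧ ks ≤ k ∧
        (∀ k', ks < k' → k' ≤ k → sumFrom b k' + k' < k + 1) ∧
        sumFrom b ks + ks = k + 1 ∧
        (∀ k', 1 ≤ k' → k' < ks → sumFrom b k' + k' < k + 1) ∧
        (∀ j : Fin k, j.val + 1 < ks → b j = 0) := by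
  change b ∈ Xi k ↔ ∃! ks, IsApex b ks
  refine ⟨fun hb => ?_, fun ⟨_, h, _⟩ => mem_Xi_of_isApex h⟩
  obtain ⟨ks, h⟩ := exists_isApex_of_mem_Xi hk hb
  exact ⟨ks, h, fun _ h' => h'.unique h⟩
end

section
/- A non-negative integer vector (b_k,...,b_1) corresponds to a directed path of length k on G_m starting from vertex (k,k) (via b_{k'} = c_{k'} − c_{k'-1}) if and only if it satisfies b_k + b_{k-1} + ... + b_{k'} + k' ≤ k + 1 for every k' with k ≥ k' ≥ 1. -/
/-!
Since `c_k = k` and `b_{ℓ+1} = c_{ℓ+1} - c_ℓ`, a path is recovered from its vector by telescoping: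
`c_ℓ = k - (b_k + ⋯ + b_{ℓ+1})`. The vertex condition `ℓ ≤ c_ℓ` is then exactly the partial-sum
inequality at `k' = ℓ + 1`, and conversely this formula defines a path whenever the inequalities hold.
-/

open Finset

section sumFrom

variable {k : ℕ} (b : Fin k → ℕ)

theorem sumFrom_antitone : Antitone (sumFrom b) :=
  fun _ _ h => sum_le_sum fun _ _ => by split_ifs <;> omega

theorem sumFrom_eq_zero {k' : ℕ} (h : k < k') : sumFrom b k' = 0 :=
  sum_eq_zero fun j _ => if_neg (by omega)

theorem sumFrom_succ_eq_add {ℓ : ℕ} (h : ℓ < k) :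
    sumFrom b (ℓ + 1) = b ⟨ℓ, h⟩ + sumFrom b (ℓ + 1 + 1) := by
  have hsplit : ∀ j : Fin k, (if ℓ + 1 ≤ j.val + 1 then b j else 0) =
      (if ⟨ℓ, h⟩ = j then b j else 0) + (if ℓ + 1 + 1 ≤ j.val + 1 then b j else 0) := by
    intro j
    rcases lt_trichotomy j.val ℓ with hj | hj | hj
    · rw [if_neg (by omega), if_neg (by simp only [Fin.ext_iff]; omega), if_neg (by omega)]
    · obtain rfl : ⟨ℓ, h⟩ = j := Fin.ext hj.symm
      rw [if_pos le_rfl, if_pos rfl, if_neg (by omega), add_zero]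
    · rw [if_pos (by omega), if_neg (by simp only [Fin.ext_iff]; omega), if_pos (by omega), zero_add]
  simp only [sumFrom, hsplit, sum_add_distrib, sum_ite_eq, mem_univ, if_true]

theorem add_sumFrom_succ_eq_of_path {c : ℕ → ℕ} (hck : c k = k)
    (hmono : ∀ ℓ < k, c ℓ ≤ c (ℓ + 1)) (hb : ∀ j : Fin k, b j = c (j.val + 1) - c j.val)
    {ℓ : ℕ} (hℓ : ℓ ≤ k) : c ℓ + sumFrom b (ℓ + 1) = k := by
  induction hℓ using Nat.decreasingInduction with
  | self => rw [hck, sumFrom_eq_zero b (Nat.lt_succ_self k), add_zero]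
  | of_succ ℓ hℓ ih =>
    have hstep := hb ⟨ℓ, hℓ⟩
    have hle := hmono ℓ hℓ
    rw [sumFrom_succ_eq_add b hℓ]
    dsimp only at hstep
    omega

theorem sumFrom_succ_add_le (h : ∀ k', 1 ≤ k' → k' ≤ k → sumFrom b k' + k' ≤ k + 1)
    {ℓ : ℕ} (hℓ : ℓ ≤ k) : sumFrom b (ℓ + 1) + ℓ ≤ k := by
  rcases hℓ.lt_or_eq with hlt | rfl
  · have := h (ℓ + 1) (by omega) hlt
    omega
  · rw [sumFrom_eq_zero b (Nat.lt_succ_self ℓ), zero_add]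

end sumFrom

/-- A non-negative integer vector `(b_k,…,b_1)` corresponds to a directed path of
length `k` on `G_m` starting from vertex `(k,k)` (via `b_{k'} = c_{k'} − c_{k'-1}`,
where the path visits vertices `(ℓ, c_ℓ)`, `ℓ = k, k-1, …, 0`) iff it satisfies
`b_k + ⋯ + b_{k'} + k' ≤ k + 1` for every `1 ≤ k' ≤ k`. -/
theorem path_iff_partial_sums (m k : ℕ) (hk : k ≤ m) (b : Fin k → ℕ) :
    (∃ c : ℕ → ℕ, c k = k ∧ (∀ ℓ ≤ k, ℓ ≤ c ℓ ∧ c ℓ ≤ m) ∧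
        (∀ ℓ < k, c ℓ ≤ c (ℓ + 1)) ∧
        (∀ j : Fin k, b j = c (j.val + 1) - c j.val)) ↔
      (∀ k', 1 ≤ k' → k' ≤ k → sumFrom b k' + k' ≤ k + 1) := by
  constructor
  · rintro ⟨c, hck, hc, hmono, hb⟩ k' hk'₁ hk'
    obtain ⟨ℓ, rfl⟩ : ∃ ℓ, k' = ℓ + 1 := ⟨k' - 1, by omega⟩
    have htelescope := add_sumFrom_succ_eq_of_path b hck hmono hb (ℓ := ℓ) (by omega)
    have hvertex := (hc ℓ (by omega)).1
    omega
  · intro h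
    refine ⟨fun ℓ => k - sumFrom b (ℓ + 1), ?_, fun ℓ hℓ => ?_, fun ℓ _ => ?_, fun j => ?_⟩
    · simp only [sumFrom_eq_zero b (Nat.lt_succ_self k), Nat.sub_zero]
    · have hbound := sumFrom_succ_add_le b h hℓ
      dsimp only
      omega
    · exact Nat.sub_le_sub_left (sumFrom_antitone b (Nat.le_succ _)) k
    · have hsplit := sumFrom_succ_eq_add b j.isLt
      have hbound := sumFrom_succ_add_le b h j.isLt.le
      simp only [Fin.eta] at hsplit ⊢
      omega
end

section
/- With γ defined as path-weight sums in G_m, the solution of the equation system satisfies the recurrence λ_k = 1 − γ(k−1, k) = γ(k−1, k−1) − γ(k−1, k) for each k ≥ 2, with λ_1 = 1, and consequently λ_k > 0 for all k. -/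
open Finset

/-- The equality system `∑_{(b_k,…,b_1) ∈ Ξ_k} ∏_j λ_j^{b_j}/b_j! = 1` for `k = 1, …, m`. -/
def eqSystem (m : ℕ) (lam : ℕ → ℝ) : Prop :=
  ∀ k, 1 ≤ k → k ≤ m →
    ∑ᶠ b ∈ Xi k, ∏ j : Fin k, lam (j.val + 1) ^ (b j) / (Nat.factorial (b j)) = 1

/-- `gamma lam k k'` is the total weight of directed paths on `G_m` from `(k,k')`
to `(0,0)`, where an edge from `(ℓ+1, c)` to `(ℓ, c'')` (with `c ≥ c''`) has
weight `λ_{ℓ+1}^{c-c''}/(c-c'')!` and `gamma lam 0 0 = 1`. -/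
noncomputable def gamma (lam : ℕ → ℝ) : ℕ → ℕ → ℝ
  | 0, 0 => 1
  | 0, _ + 1 => 0
  | k + 1, k' =>
      ∑ c ∈ Finset.Icc k k',
        lam (k + 1) ^ (k' - c) / (Nat.factorial (k' - c)) * gamma lam k c


/-!
Read `b : Fin k → ℕ` as a path of `G_k` descending from level `k`, whose state at level `i` is
`b_1 + ⋯ + b_i + j` for a shift `j`. For `b ∈ Ξ_k` take `j` to be the number of leading zeros of
`b`: the minimality built into `Ξ_k` says exactly that this path starts at `(k, k)` and stays
strictly above the diagonal until it meets it again at `(j, j)`. So the `k`-th equation reads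
`∑_{j<k} φ_j(k, k) = 1`, where `φ_j(k, c)` is the weight of the paths from `(k, c)` whose first
diagonal point below level `k` is `(j, j)`. Splitting every path at its first diagonal point gives
`γ(k, c) = ∑_{j<k} φ_j(k, c) γ(j, j)`, so by induction the equations say `γ(k, k) = 1`, and
`γ(k, k) = λ_k γ(k-1, k-1) + γ(k-1, k)` becomes the recurrence. For positivity, a constant
diagonal makes `γ(k-1, ·)` antitone, and for `k ≥ 2` expanding `γ(k-1, k)` one level down then
bounds it by `1 - λ_{k-1}² / 2 < 1`.
-/

section PrefixSum

variable {n : ℕ}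

/-- `prefixSum b i = b_1 + ⋯ + b_i` in the subscripts of the paper. -/
def prefixSum (b : Fin n → ℕ) (i : ℕ) : ℕ := ∑ ℓ : Fin n, if ℓ.val < i then b ℓ else 0

lemma prefixSum_zero (b : Fin n → ℕ) : prefixSum b 0 = 0 := by
  simp [prefixSum]

lemma prefixSum_of_le (b : Fin n → ℕ) {i : ℕ} (h : n ≤ i) : prefixSum b i = ∑ ℓ, b ℓ :=
  Finset.sum_congr rfl fun ℓ _ => if_pos (by omega)

lemma prefixSum_mono (b : Fin n → ℕ) : Monotone (prefixSum b) := fun i i' h =>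
  Finset.sum_le_sum fun ℓ _ => by split_ifs <;> omega

lemma prefixSum_sub_one_add_sumFrom (b : Fin n → ℕ) (j : ℕ) :
    prefixSum b (j - 1) + sumFrom b j = ∑ ℓ, b ℓ := by
  rw [prefixSum, sumFrom, ← Finset.sum_add_distrib]
  exact Finset.sum_congr rfl fun ℓ _ => by split_ifs <;> omega

lemma prefixSum_snoc (a : Fin n → ℕ) (x i : ℕ) :
    prefixSum (Fin.snoc a x : Fin (n + 1) → ℕ) i = prefixSum a i + if n < i then x else 0 := by
  simp [prefixSum, Fin.sum_univ_castSucc]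

lemma prefixSum_snoc_of_le (a : Fin n → ℕ) (x : ℕ) {i : ℕ} (h : i ≤ n) :
    prefixSum (Fin.snoc a x : Fin (n + 1) → ℕ) i = prefixSum a i := by
  simp [prefixSum_snoc, Nat.not_lt.2 h]

lemma prefixSum_snoc_succ (a : Fin n → ℕ) (x : ℕ) :
    prefixSum (Fin.snoc a x : Fin (n + 1) → ℕ) (n + 1) = prefixSum a n + x := by
  rw [prefixSum_snoc, if_pos n.lt_succ_self, prefixSum_of_le a n.le_succ,
    prefixSum_of_le a le_rfl]

lemma prefixSum_castLE {k : ℕ} (b : Fin k → ℕ) (h : n ≤ k) {i : ℕ} (hi : i ≤ n) :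
    prefixSum (fun ℓ : Fin n => b (Fin.castLE h ℓ)) i = prefixSum b i := by
  have hmap : prefixSum (fun ℓ : Fin n => b (Fin.castLE h ℓ)) i
      = ∑ ℓ ∈ Finset.univ.map (Fin.castLEEmb h), if ℓ.val < i then b ℓ else 0 := by
    rw [Finset.sum_map]
    rfl
  rw [hmap, prefixSum]
  refine Finset.sum_subset (Finset.subset_univ _) fun ℓ _ hℓ => if_neg fun hlt => hℓ ?_
  exact Finset.mem_map.2 ⟨⟨ℓ, by omega⟩, Finset.mem_univ _, rfl⟩

lemma apply_le_prefixSum (b : Fin n → ℕ) (ℓ : Fin n) : b ℓ ≤ prefixSum b n := by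
  rw [prefixSum_of_le b le_rfl]
  exact Finset.single_le_sum (fun _ _ => Nat.zero_le _) (Finset.mem_univ ℓ)

lemma eq_zero_of_prefixSum_eq_zero {b : Fin n → ℕ} (h : prefixSum b n = 0) : b = 0 :=
  funext fun ℓ => Nat.eq_zero_of_le_zero (h ▸ apply_le_prefixSum b ℓ)

end PrefixSum

section Paths

variable (lam : ℕ → ℝ) {n : ℕ}

noncomputable def edgeWeight (k d : ℕ) : ℝ := lam k ^ d / d.factorial

noncomputable def pathWeight (b : Fin n → ℕ) : ℝ := ∏ j : Fin n, edgeWeight lam (j + 1) (b j)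

lemma edgeWeight_zero (k : ℕ) : edgeWeight lam k 0 = 1 := by
  simp [edgeWeight]

lemma edgeWeight_one (k : ℕ) : edgeWeight lam k 1 = lam k := by
  simp [edgeWeight]

lemma edgeWeight_two (k : ℕ) : edgeWeight lam k 2 = lam k ^ 2 / 2 := by
  simp [edgeWeight, Nat.factorial]

lemma pathWeight_snoc (a : Fin n → ℕ) (x : ℕ) :
    pathWeight lam (Fin.snoc a x : Fin (n + 1) → ℕ) =
      pathWeight lam a * edgeWeight lam (n + 1) x := by
  simp [pathWeight, Fin.prod_univ_castSucc]

lemma pathWeight_zero : pathWeight lam (0 : Fin n → ℕ) = 1 := by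
  simp [pathWeight, edgeWeight]

/-- Vectors `b : Fin k → ℕ` read as paths through the states `prefixSum b i + s`, `i ≤ k`:
the state at each level `i < k` must satisfy `ok i`, the state at level `k` is `c`. -/
def barrierPaths (s : ℕ) (ok : ℕ → ℕ → Prop) (k c : ℕ) : Set (Fin k → ℕ) :=
  {b | (∀ i < k, ok i (prefixSum b i + s)) ∧ prefixSum b k + s = c}

variable {s : ℕ} {ok : ℕ → ℕ → Prop} {k c : ℕ}

lemma barrierPaths_finite : (barrierPaths s ok k c).Finite :=
  (Set.finite_Icc (0 : Fin k → ℕ) (fun _ => c)).subset fun b hb =>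
    ⟨fun _ => Nat.zero_le _,
      fun ℓ => show b ℓ ≤ c from (apply_le_prefixSum b ℓ).trans (by have := hb.2; omega)⟩

lemma barrierPaths_succ {C : Finset ℕ} (hC : ∀ c', c' ∈ C ↔ s ≤ c' ∧ c' ≤ c ∧ ok k c') :
    barrierPaths s ok (k + 1) c =
      ⋃ c' ∈ (C : Set ℕ),
        (fun a => (Fin.snoc a (c - c') : Fin (k + 1) → ℕ)) '' barrierPaths s ok k c' := by
  ext b
  obtain ⟨a, x, rfl⟩ : ∃ a x, b = Fin.snoc a x :=
    ⟨Fin.init b, b (Fin.last k), (Fin.snoc_init_self b).symm⟩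
  simp only [barrierPaths, Set.mem_ofPred_eq, Set.mem_iUnion, Set.mem_image, Finset.mem_coe, hC,
    exists_prop, prefixSum_snoc_succ]
  constructor
  · rintro ⟨hok, hc⟩
    have hok' : ∀ i < k + 1, ok i (prefixSum a i + s) := fun i hi => by
      simpa only [prefixSum_snoc_of_le a x (Nat.lt_succ_iff.1 hi)] using hok i hi
    exact ⟨prefixSum a k + s, ⟨by omega, by omega, hok' k k.lt_succ_self⟩, a,
      ⟨fun i hi => hok' i (by omega), rfl⟩, by congr 1; omega⟩
  · rintro ⟨c', ⟨-, hc'c, hokc'⟩, a', ⟨hok, rfl⟩, heq⟩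
    obtain ⟨rfl, rfl⟩ := Fin.snoc_injective2 heq
    refine ⟨fun i hi => ?_, by omega⟩
    rw [prefixSum_snoc_of_le a' _ (Nat.lt_succ_iff.1 hi)]
    rcases Nat.lt_succ_iff_lt_or_eq.1 hi with hi | rfl
    · exact hok i hi
    · exact hokc'

theorem finsum_barrierPaths_succ {C : Finset ℕ}
    (hC : ∀ c', c' ∈ C ↔ s ≤ c' ∧ c' ≤ c ∧ ok k c') :
    ∑ᶠ b ∈ barrierPaths s ok (k + 1) c, pathWeight lam b =
      ∑ c' ∈ C, edgeWeight lam (k + 1) (c - c') *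
        ∑ᶠ a ∈ barrierPaths s ok k c', pathWeight lam a := by
  have hdisj : (C : Set ℕ).PairwiseDisjoint fun c' =>
      (fun a => (Fin.snoc a (c - c') : Fin (k + 1) → ℕ)) '' barrierPaths s ok k c' := by
    intro c₁ h₁ c₂ h₂ hne
    refine Set.disjoint_left.2 ?_
    rintro _ ⟨a₁, -, rfl⟩ ⟨a₂, -, heq⟩
    have hlast := congrFun heq (Fin.last k)
    simp only [Fin.snoc_last] at hlast
    rw [Finset.mem_coe, hC] at h₁ h₂
    omega
  rw [barrierPaths_succ hC, finsum_mem_biUnion hdisj C.finite_toSet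
    fun _ _ => barrierPaths_finite.image _, finsum_mem_coe_finset]
  refine Finset.sum_congr rfl fun c' _ => ?_
  rw [finsum_mem_image (Fin.snoc_injective2.left _).injOn, mul_finsum_mem]
  exact finsum_mem_congr rfl fun a _ => by rw [pathWeight_snoc, mul_comm]

end Paths

section FirstHit

variable (lam : ℕ → ℝ)

/-- The barrier for paths ending in `(j, j)` that stay strictly above the diagonal at the levels
above `j`; below `j` the state stays `j`, i.e. the coordinates there vanish. -/
def aboveDiag (j i x : ℕ) : Prop := if i ≤ j then x = j else i < x

/-- `φ_j(k, c)`: the weight of the paths from `(k, c)` whose first diagonal point below level `k`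
is `(j, j)`. -/
noncomputable def firstHit (j k c : ℕ) : ℝ :=
  ∑ᶠ b ∈ barrierPaths j (aboveDiag j) k c, pathWeight lam b

lemma firstHit_self (j : ℕ) : firstHit lam j j j = 1 := by
  have hzero : barrierPaths j (aboveDiag j) j j = {0} := by
    ext b
    simp only [barrierPaths, aboveDiag, Set.mem_ofPred_eq, Set.mem_singleton_iff]
    constructor
    · rintro ⟨-, h⟩
      exact eq_zero_of_prefixSum_eq_zero (by omega)
    · rintro rfl
      simp only [prefixSum, Pi.zero_apply, ite_self, Finset.sum_const_zero, zero_add]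
      exact ⟨fun i hi => by simp [hi.le], trivial⟩
  rw [firstHit, hzero, finsum_mem_singleton, pathWeight_zero]

lemma firstHit_succ_self {j c : ℕ} (h : j ≤ c) :
    firstHit lam j (j + 1) c = edgeWeight lam (j + 1) (c - j) := by
  rw [firstHit, finsum_barrierPaths_succ lam (C := {j}) fun c' => by
    simp only [Finset.mem_singleton, aboveDiag, if_pos le_rfl]; omega]
  rw [Finset.sum_singleton, ← firstHit, firstHit_self, mul_one]

lemma firstHit_succ {j k : ℕ} (hjk : j < k) (c : ℕ) :
    firstHit lam j (k + 1) c =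
      ∑ c' ∈ Icc (k + 1) c, edgeWeight lam (k + 1) (c - c') * firstHit lam j k c' :=
  finsum_barrierPaths_succ lam fun c' => by
    simp only [Finset.mem_Icc, aboveDiag, if_neg (Nat.not_le.2 hjk)]; omega

end FirstHit

section Xi

variable {k : ℕ}

lemma mem_XiHat_iff {b : Fin k → ℕ} :
    b ∈ XiHat k ↔ (∀ i < k, prefixSum b k + i ≤ k + prefixSum b i) ∧ 1 ≤ prefixSum b k := by
  have htail := prefixSum_sub_one_add_sumFrom b
  simp only [← prefixSum_of_le b le_rfl] at htail
  simp only [XiHat, Set.mem_ofPred_eq, ← prefixSum_of_le b le_rfl]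
  refine and_congr_left' ⟨fun h i hi => ?_, fun h k' h1 h2 => ?_⟩
  · have := h (i + 1) (by omega) (by omega)
    have := htail (i + 1)
    simp only [Nat.add_sub_cancel] at this
    omega
  · have := h (k' - 1) (by omega)
    have := htail k'
    omega

lemma truncate_mem_XiHat_iff {k' : ℕ} (b : Fin k → ℕ) (h : k' ≤ k) :
    (fun ℓ : Fin k' => b (Fin.castLE h ℓ)) ∈ XiHat k' ↔
      (∀ i < k', prefixSum b k' + i ≤ k' + prefixSum b i) ∧ 1 ≤ prefixSum b k' := by
  rw [mem_XiHat_iff, prefixSum_castLE b h le_rfl]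
  exact and_congr_left' (forall₂_congr fun i hi => by rw [prefixSum_castLE b h hi.le])

lemma lt_prefixSum_add_of_mem_Xi {j : ℕ} {b : Fin k → ℕ} (hb : b ∈ Xi k)
    (hj : prefixSum b j = 0) (hpos : ∀ i, j < i → i ≤ k → prefixSum b i ≠ 0) :
    ∀ i, j < i → i < k → i < prefixSum b i + j := by
  intro i
  induction i using Nat.strong_induction_on with
  | _ i ih =>
    intro hji hik
    obtain ⟨i', hi', hviol⟩ : ∃ i' < i, i + prefixSum b i' < prefixSum b i + i' := by
      by_contra! hall
      exact hb.2 i hik ((truncate_mem_XiHat_iff b hik.le).2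
        ⟨hall, Nat.one_le_iff_ne_zero.2 (hpos i hji hik.le)⟩)
    rcases le_or_gt i' j with hij | hji'
    · have := prefixSum_mono b hij
      omega
    · have := ih i' hi' hji' (hi'.trans hik)
      omega

lemma exists_mem_barrierPaths_of_mem_Xi {b : Fin k → ℕ} (hb : b ∈ Xi k) :
    ∃ j < k, b ∈ barrierPaths j (aboveDiag j) k k := by
  obtain ⟨hA, hpos⟩ := mem_XiHat_iff.1 hb.1
  obtain ⟨j, hj, hjk, hjpos⟩ : ∃ j, prefixSum b j = 0 ∧ j ≤ k ∧
      ∀ i, j < i → i ≤ k → prefixSum b i ≠ 0 :=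
    ⟨_, Nat.findGreatest_spec (P := fun i => prefixSum b i = 0) (Nat.zero_le k)
      (prefixSum_zero b), Nat.findGreatest_le k,
      fun _ h1 h2 => Nat.findGreatest_is_greatest (P := fun i => prefixSum b i = 0) h1 h2⟩
  replace hjk : j < k := hjk.lt_of_ne fun h => by subst h; omega
  have hbound := lt_prefixSum_add_of_mem_Xi hb hj hjpos
  have hend : prefixSum b k + j = k := by
    have := hA j hjk
    rcases Nat.lt_or_ge (j + 1) k with h | h
    · have := hbound (k - 1) (by omega) (by omega)
      have := prefixSum_mono b (Nat.sub_le k 1)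
      omega
    · omega
  refine ⟨j, hjk, fun i hi => ?_, hend⟩
  by_cases hij : i ≤ j
  · have := prefixSum_mono b hij
    simp only [aboveDiag, if_pos hij]
    omega
  · simp only [aboveDiag, if_neg hij]
    exact hbound i (by omega) hi

lemma mem_Xi_of_mem_barrierPaths {j : ℕ} (hjk : j < k) {b : Fin k → ℕ}
    (hb : b ∈ barrierPaths j (aboveDiag j) k k) : b ∈ Xi k := by
  obtain ⟨hok, hend⟩ := hb
  have hj : prefixSum b j = 0 := by
    have := hok j hjk
    simp only [aboveDiag, if_pos le_rfl] at this
    omega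
  refine ⟨mem_XiHat_iff.2 ⟨fun i hi => ?_, by omega⟩, fun k' hk' htr => ?_⟩
  · have := hok i hi
    simp only [aboveDiag] at this
    split_ifs at this <;> omega
  · obtain ⟨hA', hpos'⟩ := (truncate_mem_XiHat_iff b hk'.le).1 htr
    rcases le_or_gt k' j with h | h
    · have := prefixSum_mono b h
      omega
    · have := hA' j h
      have := hok k' hk'
      simp only [aboveDiag, if_neg (Nat.not_le.2 h)] at this
      omega

theorem mem_Xi_iff {b : Fin k → ℕ} :
    b ∈ Xi k ↔ ∃ j < k, b ∈ barrierPaths j (aboveDiag j) k k :=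
  ⟨exists_mem_barrierPaths_of_mem_Xi, fun ⟨_, hjk, hb⟩ => mem_Xi_of_mem_barrierPaths hjk hb⟩

theorem finsum_Xi (lam : ℕ → ℝ) :
    ∑ᶠ b ∈ Xi k, pathWeight lam b = ∑ j ∈ range k, firstHit lam j k k := by
  have hXi : Xi k = ⋃ j ∈ (range k : Set ℕ), barrierPaths j (aboveDiag j) k k := by
    ext b
    simp [mem_Xi_iff]
  have hdisj : (range k : Set ℕ).PairwiseDisjoint fun j => barrierPaths j (aboveDiag j) k k :=
    fun j₁ _ j₂ _ hne => Set.disjoint_left.2 fun b h₁ h₂ =>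
      hne (by have := h₁.2; have := h₂.2; omega)
  rw [hXi, finsum_mem_biUnion hdisj (range k).finite_toSet fun _ _ => barrierPaths_finite,
    finsum_mem_coe_finset]
  rfl

end Xi

section Gamma

variable (lam : ℕ → ℝ)

lemma gamma_zero (c : ℕ) : gamma lam 0 c = if c = 0 then 1 else 0 := by
  cases c <;> rfl

lemma gamma_succ (k c : ℕ) :
    gamma lam (k + 1) c = ∑ c' ∈ Icc k c, edgeWeight lam (k + 1) (c - c') * gamma lam k c' :=
  rfl

lemma gamma_succ_succ_right {n c : ℕ} (h : n ≤ c) :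
    gamma lam (n + 1) (c + 1) = edgeWeight lam (n + 1) (c + 1 - n) * gamma lam n n +
      ∑ c' ∈ Icc n c, edgeWeight lam (n + 1) (c - c') * gamma lam n (c' + 1) := by
  rw [gamma_succ, ← Finset.insert_Icc_add_one_left_eq_Icc (by omega : n ≤ c + 1),
    Finset.sum_insert (by simp), ← Finset.map_add_right_Icc, Finset.sum_map]
  simp only [addRightEmbedding_apply, Nat.add_sub_add_right]

lemma gamma_diag_succ (n : ℕ) :
    gamma lam (n + 1) (n + 1) = lam (n + 1) * gamma lam n n + gamma lam n (n + 1) := by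
  rw [gamma_succ, ← Finset.insert_Icc_add_one_left_eq_Icc (by omega : n ≤ n + 1),
    Finset.Icc_self, Finset.sum_insert (by simp), Finset.sum_singleton, Nat.add_sub_cancel_left,
    Nat.sub_self, edgeWeight_one, edgeWeight_zero, one_mul]

lemma gamma_self_succ_eq_one_sub {n : ℕ} (hn : gamma lam n n = 1)
    (hn' : gamma lam (n + 1) (n + 1) = 1) : gamma lam n (n + 1) = 1 - lam (n + 1) := by
  have := gamma_diag_succ lam n
  rw [hn, hn'] at this
  linarith

theorem gamma_succ_eq_sum_firstHit {k c : ℕ} (hc : k + 1 ≤ c) :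
    gamma lam (k + 1) c = ∑ j ∈ range (k + 1), firstHit lam j (k + 1) c * gamma lam j j := by
  induction k generalizing c with
  | zero =>
    rw [gamma_succ, Finset.sum_eq_single 0
      (fun c' _ hc' => by rw [gamma_zero, if_neg hc', mul_zero]) (by simp),
      sum_range_one, firstHit_succ_self lam (Nat.zero_le c)]
  | succ k ih =>
    rw [gamma_succ, ← Finset.insert_Icc_add_one_left_eq_Icc (by omega : k + 1 ≤ c),
      Finset.sum_insert (by simp), Finset.sum_range_succ, firstHit_succ_self lam (by omega),
      add_comm]
    congr 1
    calc ∑ c' ∈ Icc (k + 1 + 1) c, edgeWeight lam (k + 1 + 1) (c - c') * gamma lam (k + 1) c'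
        = ∑ c' ∈ Icc (k + 1 + 1) c, ∑ j ∈ range (k + 1),
            edgeWeight lam (k + 1 + 1) (c - c') * firstHit lam j (k + 1) c' * gamma lam j j := by
          refine Finset.sum_congr rfl fun c' hc' => ?_
          rw [ih (by have := (Finset.mem_Icc.1 hc').1; omega), Finset.mul_sum]
          simp only [mul_assoc]
      _ = ∑ j ∈ range (k + 1), firstHit lam j (k + 1 + 1) c * gamma lam j j := by
          rw [Finset.sum_comm]
          refine Finset.sum_congr rfl fun j hj => ?_
          rw [firstHit_succ lam (by simpa using hj), Finset.sum_mul]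

lemma edgeWeight_nonneg {k : ℕ} (h : 0 ≤ lam k) (d : ℕ) : 0 ≤ edgeWeight lam k d :=
  div_nonneg (pow_nonneg h d) (Nat.cast_nonneg _)

lemma edgeWeight_succ_le {k : ℕ} (h : 0 ≤ lam k) (d : ℕ) :
    edgeWeight lam k (d + 1) ≤ lam k * edgeWeight lam k d := by
  rw [edgeWeight, edgeWeight, mul_div_assoc', ← pow_succ']
  exact div_le_div_of_nonneg_left (pow_nonneg h _) (by positivity)
    (by exact_mod_cast Nat.factorial_le d.le_succ)

theorem gamma_succ_right_le {n : ℕ} (hlam : ∀ j, 1 ≤ j → j ≤ n → 0 ≤ lam j)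
    (hdiag : ∀ j ≤ n, gamma lam j j = 1) {c : ℕ} (hc : n ≤ c) :
    gamma lam n (c + 1) ≤ gamma lam n c := by
  induction n generalizing c with
  | zero => rw [gamma_zero, gamma_zero, if_neg c.succ_ne_zero]; split_ifs <;> norm_num
  | succ n ih =>
    have hw := edgeWeight_nonneg lam (hlam (n + 1) le_add_self le_rfl)
    have hn := hdiag n n.le_succ
    have hn1 := gamma_self_succ_eq_one_sub lam hn (hdiag (n + 1) le_rfl)
    have hsplit : ∀ f : ℕ → ℝ, ∑ c' ∈ Icc n c, f c' = f n + ∑ c' ∈ Icc (n + 1) c, f c' :=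
      fun f => by
        rw [← Finset.insert_Icc_add_one_left_eq_Icc (by omega), Finset.sum_insert (by simp)]
    have hjunction := edgeWeight_succ_le lam (hlam (n + 1) le_add_self le_rfl) (c - n)
    have htail : ∑ c' ∈ Icc (n + 1) c, edgeWeight lam (n + 1) (c - c') * gamma lam n (c' + 1) ≤
        ∑ c' ∈ Icc (n + 1) c, edgeWeight lam (n + 1) (c - c') * gamma lam n c' :=
      Finset.sum_le_sum fun c' hc' => mul_le_mul_of_nonneg_left
        (ih (fun j h1 h2 => hlam j h1 (by omega)) (fun j hj => hdiag j (by omega))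
          (by have := (Finset.mem_Icc.1 hc').1; omega)) (hw _)
    rw [gamma_succ_succ_right lam (by omega), gamma_succ, hsplit, hsplit, hn, hn1,
      Nat.sub_add_comm (by omega : n ≤ c)]
    nlinarith

theorem gamma_self_succ_lt_one {n : ℕ} (hlam : ∀ j, 1 ≤ j → j ≤ n → 0 < lam j)
    (hdiag : ∀ j ≤ n, gamma lam j j = 1) : gamma lam n (n + 1) < 1 := by
  rcases n with _ | p
  · simp [gamma_zero]
  · have hpos := hlam (p + 1) le_add_self le_rfl
    have hp := hdiag p p.le_succ
    have hp1 := gamma_self_succ_eq_one_sub lam hp (hdiag (p + 1) le_rfl)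
    have hanti := gamma_succ_right_le lam (fun j h1 h2 => (hlam j h1 (by omega)).le)
      (fun j hj => hdiag j (by omega)) (by omega : p ≤ p + 1)
    rw [gamma_succ_succ_right lam (by omega : p ≤ p + 1),
      ← Finset.insert_Icc_add_one_left_eq_Icc (by omega : p ≤ p + 1),
      Finset.Icc_self, Finset.sum_insert (by simp), Finset.sum_singleton, hp, hp1,
      show p + 1 + 1 - p = 2 by omega, Nat.add_sub_cancel_left, Nat.sub_self, edgeWeight_two,
      edgeWeight_one, edgeWeight_zero]
    nlinarith

end Gamma

section Recurrence

variable (lam : ℕ → ℝ) {m : ℕ}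

theorem gamma_diag_eq_one (h : eqSystem m lam) {k : ℕ} (hk : k ≤ m) : gamma lam k k = 1 := by
  induction k using Nat.strong_induction_on with
  | _ k ih =>
    rcases k with _ | n
    · rfl
    · rw [gamma_succ_eq_sum_firstHit lam le_rfl, Finset.sum_congr rfl fun j hj => by
        rw [ih j (by simpa using hj) (by simp at hj; omega), mul_one], ← finsum_Xi]
      exact h (n + 1) (by omega) hk

theorem lam_succ_eq_one_sub_gamma (h : eqSystem m lam) {n : ℕ} (hn : n + 1 ≤ m) :
    lam (n + 1) = 1 - gamma lam n (n + 1) := by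
  rw [gamma_self_succ_eq_one_sub lam (gamma_diag_eq_one lam h (by omega))
    (gamma_diag_eq_one lam h hn), sub_sub_cancel]

theorem lam_pos (h : eqSystem m lam) {k : ℕ} (hk : 1 ≤ k) (hkm : k ≤ m) : 0 < lam k := by
  induction k using Nat.strong_induction_on with
  | _ k ih =>
    obtain ⟨n, rfl⟩ : ∃ n, k = n + 1 := ⟨k - 1, by omega⟩
    rw [lam_succ_eq_one_sub_gamma lam h hkm, sub_pos]
    exact gamma_self_succ_lt_one lam (fun j h1 h2 => ih j (by omega) h1 (by omega))
      fun j hj => gamma_diag_eq_one lam h (by omega)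

end Recurrence

/-- The solution of the equation system satisfies `λ_1 = 1`,
`λ_k = 1 − γ(k−1,k) = γ(k−1,k−1) − γ(k−1,k)` for `2 ≤ k ≤ m`, and consequently
`λ_k > 0` for all `k ∈ {1,…,m}`. -/
theorem lam_recurrence (m : ℕ) (hm : 1 ≤ m) (lam : ℕ → ℝ) (h : eqSystem m lam) :
    lam 1 = 1 ∧
    (∀ k, 2 ≤ k → k ≤ m →
      lam k = 1 - gamma lam (k - 1) k ∧
      lam k = gamma lam (k - 1) (k - 1) - gamma lam (k - 1) k) ∧
    (∀ k, 1 ≤ k → k ≤ m → 0 < lam k) := by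
  have hrec : ∀ k, 1 ≤ k → k ≤ m → lam k = 1 - gamma lam (k - 1) k := fun k hk hkm => by
    obtain ⟨n, rfl⟩ : ∃ n, k = n + 1 := ⟨k - 1, by omega⟩
    exact lam_succ_eq_one_sub_gamma lam h hkm
  refine ⟨?_, fun k hk hkm => ⟨hrec k (by omega) hkm, ?_⟩, fun k => lam_pos lam h⟩
  · simpa [gamma_zero] using hrec 1 le_rfl hm
  · rw [gamma_diag_eq_one lam h (by omega : k - 1 ≤ m), hrec k (by omega) hkm]
end

section
/- For the single-stopping odds problem with i.i.d. Bernoulli trials X_1,...,X_N each with failure probability q = 1/(1+r), the win probability of the threshold strategy that waits until the sum of remaining odds drops below 1 converges, as r → 0+ with Nr bounded below away from 1, to e^{-1}. -/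
open Filter Topology

/-- The optimal single-stopping threshold: the smallest index `i ≥ 1` such that
the sum of the odds from `i` on, `(N − i + 1)·r`, is at most `1 + r`. -/
noncomputable def thr (N : ℕ) (r : ℝ) : ℕ :=
  sInf {i : ℕ | 1 ≤ i ∧ ((N : ℝ) - i + 1) * r ≤ 1 + r}

/-- Win probability of the single-stopping threshold strategy on `N` i.i.d.
Bernoulli trials with common failure probability `q = 1/(1+r)`:
`q^{N-i+1}·(N−i+1)·r` with `i = thr N r`. -/
noncomputable def winProb (N : ℕ) (r : ℝ) : ℝ :=
  (1 / (1 + r)) ^ (N - thr N r + 1) * (((N : ℝ) - thr N r + 1) * r)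

/-! With `m = N - thr N r + 1` trials from the threshold on, minimality of the threshold squeezes
the odds sum `m * r` into `(1, 1 + r]`, so `m * r → 1`. The win probability is
`(1 + r)⁻ᵐ * (m * r)`, and `(1 + r)ᵐ = exp (m * r * (log (1 + r) / r)) → e`
because `log (1 + r) / r → 1`. -/

lemma tendsto_log_one_add_div_self :
    Tendsto (fun x : ℝ => Real.log (1 + x) / x) (𝓝[≠] 0) (𝓝 1) := by
  simpa [div_eq_inv_mul] using (Real.hasDerivAt_log one_ne_zero).tendsto_slope_zero

lemma tendsto_one_add_pow_exp_of_tendsto_mul {ι : Type*} {l : Filter ι} {r : ι → ℝ}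
    {m : ι → ℕ} {t : ℝ} (hr : Tendsto r l (𝓝[≠] 0))
    (hm : Tendsto (fun i => m i * r i) l (𝓝 t)) :
    Tendsto (fun i => (1 + r i) ^ m i) l (𝓝 (Real.exp t)) := by
  have hlog : Tendsto (fun i => m i * Real.log (1 + r i)) l (𝓝 t) := by
    have := hm.mul (tendsto_log_one_add_div_self.comp hr)
    rw [mul_one] at this
    refine this.congr' ?_
    filter_upwards [hr self_mem_nhdsWithin] with i (hi : r i ≠ 0)
    simp only [Function.comp_apply]
    field_simp
  have hpos : ∀ᶠ i in l, 0 < 1 + r i :=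
    (tendsto_nhds_of_tendsto_nhdsWithin hr).eventually (lt_mem_nhds neg_one_lt_zero)
      |>.mono fun i hi => by linarith
  refine ((Real.continuous_exp.tendsto t).comp hlog).congr' ?_
  filter_upwards [hpos] with i hi
  rw [Function.comp_apply, Real.exp_nat_mul, Real.exp_log hi]

section Threshold

variable {N : ℕ} {r : ℝ}

lemma one_le_of_one_add_lt_mul (hr : 0 ≤ r) (h : 1 + r < N * r) : 1 ≤ N :=
  Nat.one_le_iff_ne_zero.2 <| by rintro rfl; rw [Nat.cast_zero, zero_mul] at h; linarith

lemma thr_mem (hN : 1 ≤ N) :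
    thr N r ∈ {i : ℕ | 1 ≤ i ∧ ((N : ℝ) - i + 1) * r ≤ 1 + r} :=
  Nat.sInf_mem ⟨N, hN, by simp⟩

lemma thr_le (hN : 1 ≤ N) : thr N r ≤ N :=
  Nat.sInf_le ⟨hN, by simp⟩

lemma natCast_sub_thr_add_one (hN : 1 ≤ N) :
    ((N - thr N r + 1 : ℕ) : ℝ) = N - thr N r + 1 := by
  rw [Nat.cast_add, Nat.cast_sub (thr_le hN), Nat.cast_one]

lemma one_lt_sub_thr_add_one_mul (hr : 0 ≤ r) (h : 1 + r < N * r) :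
    1 < ((N : ℝ) - thr N r + 1) * r := by
  obtain ⟨hthr, hspec⟩ := thr_mem (r := r) (one_le_of_one_add_lt_mul hr h)
  have hne : thr N r ≠ 1 := by
    rintro h1
    rw [h1] at hspec
    push_cast at hspec
    linarith
  have hprev : ¬(1 ≤ thr N r - 1 ∧ ((N : ℝ) - (thr N r - 1 : ℕ) + 1) * r ≤ 1 + r) :=
    Nat.notMem_of_lt_sInf (show thr N r - 1 < thr N r by omega)
  rw [Nat.cast_sub hthr, not_and, not_le] at hprev
  push_cast at hprev
  linarith [hprev (by omega)]

lemma winProb_eq (hN : 1 ≤ N) :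
    winProb N r = ((1 + r) ^ (N - thr N r + 1))⁻¹ * (((N - thr N r + 1 : ℕ) : ℝ) * r) := by
  rw [winProb, one_div, inv_pow, natCast_sub_thr_add_one hN]

end Threshold

/-- For the single-stopping odds problem with i.i.d. trials of common odds `r`,
the win probability of the threshold strategy converges to `e⁻¹` as `r → 0⁺`
with `N·r` bounded below away from `1`. -/
theorem winProb_tendsto_exp_neg_one (r : ℕ → ℝ) (N : ℕ → ℕ)
    (hr : ∀ n, 0 < r n) (h0 : Tendsto r atTop (𝓝 0))
    (hN : ∃ c : ℝ, 1 < c ∧ ∀ n, c ≤ (N n : ℝ) * r n) :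
    Tendsto (fun n => winProb (N n) (r n)) atTop (𝓝 (Real.exp (-1))) := by
  obtain ⟨c, hc1, hc⟩ := hN
  have hlarge : ∀ᶠ n in atTop, 1 + r n < N n * r n :=
    (h0.eventually (gt_mem_nhds (sub_pos.2 hc1))).mono fun n hn => by linarith [hc n]
  have hN1 : ∀ᶠ n in atTop, 1 ≤ N n :=
    hlarge.mono fun n => one_le_of_one_add_lt_mul (hr n).le
  have hodds :
      Tendsto (fun n => ((N n - thr (N n) (r n) + 1 : ℕ) : ℝ) * r n) atTop (𝓝 1) := by
    refine tendsto_of_tendsto_of_tendsto_of_le_of_le' tendsto_const_nhds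
      (by simpa using h0.const_add 1) ?_ ?_
    · filter_upwards [hlarge, hN1] with n hn hn1
      rw [natCast_sub_thr_add_one hn1]
      exact (one_lt_sub_thr_add_one_mul (hr n).le hn).le
    · filter_upwards [hN1] with n hn1
      rw [natCast_sub_thr_add_one hn1]
      exact (thr_mem hn1).2
  have hr' : Tendsto r atTop (𝓝[≠] 0) :=
    tendsto_nhdsWithin_iff.2 ⟨h0, .of_forall fun n => (hr n).ne'⟩
  have hlim := ((tendsto_one_add_pow_exp_of_tendsto_mul hr' hodds).inv₀
    (Real.exp_ne_zero 1)).mul hodds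
  rw [mul_one, ← Real.exp_neg] at hlim
  refine hlim.congr' ?_
  filter_upwards [hN1] with n hn1
  exact (winProb_eq hn1).symm
end

section
/- For the odds problem with 2 stopping chances and threshold strategy with blocks B_2, B_1 (indices in [i^{(2)}, i^{(1)}) and [i^{(1)}, N] respectively), the probability of obtaining the last success equals (∏_{i∈B_1} q_i)(Σ_{i∈B_1} r_i) + (∏_{i∈B_2∪B_1} q_i)(Σ_{i∈B_2} r_i + Σ_{{i,i'}⊆B_1} r_i r_{i'}). -/
/-!
The winning event is the disjoint union of three events, each of which depends only on the set
of successes inside `B₂ ∪ B₁` (or inside `B₁`) and prescribes it to lie in a family of subsets: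
the singletons of `B₁`, the singletons of `B₂`, and the pairs of `B₁`. By independence, the
probability that the successes inside `A` form exactly the set `t` is
`∏_{i ∈ t} p_i ∏_{i ∈ A \ t} q_i = (∏_{i ∈ A} q_i) ∏_{i ∈ t} r_i`; summing over the three families
gives the formula.
-/

open Finset

/-- Number of successes of the realization `x` inside the block `B`. -/
def cnt {N : ℕ} (B : Finset (Fin N)) (x : Fin N → Bool) : ℕ :=
  (B.filter fun i => x i).card

def bernoulliProb {ι R : Type*} [Fintype ι] [DecidableEq ι] [CommRing R] (p : ι → R)
    (E : (ι → Bool) → Prop) [DecidablePred E] : R :=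
  ∑ x : ι → Bool, if E x then ∏ i, (if x i then p i else 1 - p i) else 0

theorem filter_eq_iff_forall_eq_decide {ι : Type*} [DecidableEq ι] {A t : Finset ι} (ht : t ⊆ A)
    (x : ι → Bool) : A.filter (fun i => x i) = t ↔ ∀ i ∈ A, x i = decide (i ∈ t) := by
  simp only [Finset.ext_iff, mem_filter]
  refine ⟨fun h i hi => ?_, fun h i => ?_⟩
  · simp [← h i, hi]
  · by_cases hi : i ∈ A
    · simp [hi, h i hi]
    · exact ⟨fun h' => absurd h'.1 hi, fun h' => absurd (ht h') hi⟩

theorem filter_union_mem_powersetCard_iff {α : Type*} [DecidableEq α] {B C : Finset α}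
    (h : Disjoint B C) (P : α → Prop) [DecidablePred P] (k : ℕ) :
    (B ∪ C).filter P ∈ B.powersetCard k ↔ (B.filter P).card = k ∧ (C.filter P).card = 0 := by
  have hC : C.filter P ⊆ B ↔ C.filter P = ∅ :=
    ⟨fun hsub => disjoint_self.mp ((h.mono_right (filter_subset P C)).mono_left hsub),
      fun hempty => hempty ▸ empty_subset B⟩
  rw [filter_union, mem_powersetCard, union_subset_iff, hC, card_eq_zero]
  constructor
  · rintro ⟨⟨-, hempty⟩, hk⟩
    rw [hempty, union_empty] at hk
    exact ⟨hk, hempty⟩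
  · rintro ⟨hk, hempty⟩
    rw [hempty, union_empty]
    exact ⟨⟨filter_subset P B, rfl⟩, hk⟩

theorem sum_powersetCard_one_prod {α R : Type*} [DecidableEq α] [CommSemiring R]
    (A : Finset α) (f : α → R) : ∑ s ∈ A.powersetCard 1, ∏ i ∈ s, f i = ∑ i ∈ A, f i := by
  simp [powersetCard_one]

theorem prod_ite_mem_eq_prod_mul_prod_div {ι K : Type*} [DecidableEq ι] [Field K]
    {A t : Finset ι} (ht : t ⊆ A) (p q : ι → K) (hq : ∀ i ∈ A, q i ≠ 0) :
    ∏ i ∈ A, (if i ∈ t then p i else q i) = (∏ i ∈ A, q i) * ∏ i ∈ t, p i / q i := by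
  calc _ = ∏ i ∈ A, q i * (if i ∈ t then p i / q i else 1) :=
        prod_congr rfl fun i hi => by split_ifs <;> field_simp [hq i hi]
    _ = _ := by rw [prod_mul_distrib, prod_ite_mem, inter_eq_right.mpr ht]

namespace bernoulliProb

variable {ι R : Type*} [Fintype ι] [DecidableEq ι] [CommRing R] (p : ι → R)

theorem congr {E F : (ι → Bool) → Prop} [DecidablePred E] [DecidablePred F]
    (h : ∀ x, E x ↔ F x) : bernoulliProb p E = bernoulliProb p F :=
  sum_congr rfl fun x _ => if_congr (h x) rfl rfl

theorem or_of_disjoint {E F : (ι → Bool) → Prop} [DecidablePred E] [DecidablePred F]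
    (h : ∀ x, ¬(E x ∧ F x)) :
    bernoulliProb p (fun x => E x ∨ F x) = bernoulliProb p E + bernoulliProb p F := by
  rw [bernoulliProb, bernoulliProb, bernoulliProb, ← sum_add_distrib]
  refine sum_congr rfl fun x _ => ?_
  by_cases hE : E x <;> by_cases hF : F x <;> simp_all

theorem filter_eq {A t : Finset ι} (ht : t ⊆ A) :
    bernoulliProb p (fun x => A.filter (fun i => x i) = t)
      = ∏ i ∈ A, if i ∈ t then p i else 1 - p i := by
  -- The indicator of the event is a product over coordinates, so the sum over outcomes factorizes.
  calc _ = ∑ x : ι → Bool, ∏ i, (if i ∈ A then (if x i = decide (i ∈ t) then 1 else 0) else 1)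
          * (if x i then p i else 1 - p i) := by
        refine sum_congr rfl fun x _ => ?_
        rw [prod_mul_distrib, prod_ite_mem, univ_inter]
        simp only [prod_boole, ite_mul, one_mul, zero_mul, filter_eq_iff_forall_eq_decide ht]
    _ = ∏ i, if i ∈ A then (if i ∈ t then p i else 1 - p i) else 1 := by
        rw [← Fintype.prod_sum fun i (b : Bool) =>
          (if i ∈ A then (if b = decide (i ∈ t) then 1 else 0) else 1) * (if b then p i else 1 - p i)]
        refine prod_congr rfl fun i _ => ?_
        by_cases hi : i ∈ A <;> by_cases hit : i ∈ t <;> simp [hi, hit]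
    _ = _ := by rw [prod_ite_mem, univ_inter]

theorem filter_mem {A : Finset ι} {T : Finset (Finset ι)} (hT : ∀ t ∈ T, t ⊆ A) :
    bernoulliProb p (fun x => A.filter (fun i => x i) ∈ T)
      = ∑ t ∈ T, ∏ i ∈ A, if i ∈ t then p i else 1 - p i := by
  calc _ = ∑ x : ι → Bool, ∑ t ∈ T, if A.filter (fun i => x i) = t
          then ∏ i, (if x i then p i else 1 - p i) else 0 :=
        sum_congr rfl fun x _ => (sum_ite_eq T _ _).symm
    _ = _ := by
        rw [sum_comm]
        exact sum_congr rfl fun t htT => filter_eq p (hT t htT)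

theorem filter_mem_eq_prod_mul_sum_odds {K : Type*} [Field K] (p : ι → K) {A : Finset ι}
    {T : Finset (Finset ι)} (hT : ∀ t ∈ T, t ⊆ A) (hp : ∀ i ∈ A, p i ≠ 1) :
    bernoulliProb p (fun x => A.filter (fun i => x i) ∈ T)
      = (∏ i ∈ A, (1 - p i)) * ∑ t ∈ T, ∏ i ∈ t, p i / (1 - p i) := by
  rw [filter_mem p hT, mul_sum]
  exact sum_congr rfl fun t ht => prod_ite_mem_eq_prod_mul_prod_div (hT t ht) _ _
    fun i hi => sub_ne_zero.mpr (hp i hi).symm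

end bernoulliProb

theorem win_prob_two_stops_general (N : ℕ) (p : Fin N → ℝ) (hp : ∀ i, 0 < p i ∧ p i < 1)
    (i2 i1 : ℕ)
    (B1 B2 : Finset (Fin N))
    (hB1 : B1 = Finset.univ.filter fun i => i1 ≤ i.val + 1)
    (hB2 : B2 = Finset.univ.filter fun i => i2 ≤ i.val + 1 ∧ i.val + 1 < i1) :
    (∑ x : Fin N → Bool,
      if cnt B1 x = 1 ∨ (cnt B2 x = 1 ∧ cnt B1 x = 0) ∨
          (cnt B2 x = 0 ∧ cnt B1 x = 2)
      then ∏ i, (if x i then p i else 1 - p i) else 0)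
    = (∏ i ∈ B1, (1 - p i)) * (∑ i ∈ B1, p i / (1 - p i))
      + (∏ i ∈ B2 ∪ B1, (1 - p i)) *
          ((∑ i ∈ B2, p i / (1 - p i))
            + ∑ s ∈ B1.powersetCard 2, ∏ i ∈ s, p i / (1 - p i)) := by
  have hp1 : ∀ i, p i ≠ 1 := fun i => (hp i).2.ne
  have hdisj : Disjoint B2 B1 := by
    subst hB1 hB2
    simp only [disjoint_left, mem_filter, mem_univ, true_and]
    omega
  have hsingle1 : ∀ x : Fin N → Bool,
      cnt B1 x = 1 ↔ B1.filter (fun i => x i) ∈ B1.powersetCard 1 := fun x => by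
    simp [cnt, mem_powersetCard]
  have hsingle2 : ∀ x : Fin N → Bool,
      cnt B2 x = 1 ∧ cnt B1 x = 0 ↔ (B2 ∪ B1).filter (fun i => x i) ∈ B2.powersetCard 1 :=
    fun x => (filter_union_mem_powersetCard_iff hdisj _ 1).symm
  have hpair1 : ∀ x : Fin N → Bool,
      cnt B2 x = 0 ∧ cnt B1 x = 2 ↔ (B2 ∪ B1).filter (fun i => x i) ∈ B1.powersetCard 2 :=
    fun x => by rw [union_comm, filter_union_mem_powersetCard_iff hdisj.symm, and_comm]; rfl
  change bernoulliProb p (fun x => cnt B1 x = 1 ∨ (cnt B2 x = 1 ∧ cnt B1 x = 0) ∨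
    (cnt B2 x = 0 ∧ cnt B1 x = 2)) = _
  rw [bernoulliProb.or_of_disjoint p fun x => by omega,
    bernoulliProb.or_of_disjoint p fun x => by omega,
    bernoulliProb.congr p hsingle1, bernoulliProb.congr p hsingle2, bernoulliProb.congr p hpair1,
    bernoulliProb.filter_mem_eq_prod_mul_sum_odds p (fun _ ht => (mem_powersetCard.mp ht).1)
      fun i _ => hp1 i,
    bernoulliProb.filter_mem_eq_prod_mul_sum_odds p
      (fun _ ht => (mem_powersetCard.mp ht).1.trans subset_union_left) fun i _ => hp1 i,
    bernoulliProb.filter_mem_eq_prod_mul_sum_odds p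
      (fun _ ht => (mem_powersetCard.mp ht).1.trans subset_union_right) fun i _ => hp1 i,
    sum_powersetCard_one_prod, sum_powersetCard_one_prod]
  ring

/-- For the odds problem with 2 stopping chances and thresholds
`1 ≤ i₂ ≤ i₁ ≤ N` (blocks `B₂ = [i₂, i₁)`, `B₁ = [i₁, N]`, indices written with
subscripts `1,…,N`, so `i : Fin N` has subscript `i+1`), the probability of
obtaining the last success equals
`(∏_{i∈B₁} q_i)(∑_{i∈B₁} r_i) + (∏_{i∈B₂∪B₁} q_i)(∑_{i∈B₂} r_i + ∑_{{i,i'}⊆B₁} r_i r_{i'})`.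
A realization wins iff its pattern `(b₂,b₁)` of block success counts has a left
truncated subvector in `{(1),(1,0),(0,2)}`. -/
theorem win_prob_two_stops (N : ℕ) (p : Fin N → ℝ) (hp : ∀ i, 0 < p i ∧ p i < 1)
    (i2 i1 : ℕ) (h2 : 1 ≤ i2) (h21 : i2 ≤ i1) (h1N : i1 ≤ N)
    (B1 B2 : Finset (Fin N))
    (hB1 : B1 = Finset.univ.filter fun i => i1 ≤ i.val + 1)
    (hB2 : B2 = Finset.univ.filter fun i => i2 ≤ i.val + 1 ∧ i.val + 1 < i1)
    (hcard : 2 ≤ B1.card) :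
    (∑ x : Fin N → Bool,
      if cnt B1 x = 1 ∨ (cnt B2 x = 1 ∧ cnt B1 x = 0) ∨
          (cnt B2 x = 0 ∧ cnt B1 x = 2)
      then ∏ i, (if x i then p i else 1 - p i) else 0)
    = (∏ i ∈ B1, (1 - p i)) * (∑ i ∈ B1, p i / (1 - p i))
      + (∏ i ∈ B2 ∪ B1, (1 - p i)) *
          ((∑ i ∈ B2, p i / (1 - p i))
            + ∑ s ∈ B1.powersetCard 2, ∏ i ∈ s, p i / (1 - p i)) :=
  win_prob_two_stops_general N p hp i2 i1 B1 B2 hB1 hB2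
end

section
/- In the classical secretary problem setting with P[X_i = 1] = 1/i for i = 2,...,N (so q_i = 1 − 1/i and odds r_i = 1/(i−1)), if thresholds i_N^{(k)} satisfy i_N^{(k)} → ∞ and Σ_{i ∈ B_k(N)} r_i → λ_k > 0 as N → ∞, then ∏_{i ∈ B_k(N)} q_i → e^{-λ_k} and for every b ∈ {1,...,m}, the elementary symmetric polynomial f^b(B_k(N)) of the odds over B_k(N) converges to λ_k^b/b!. -/
open Filter Topology Finset
open scoped Nat

/-!
Write `S = ∑ rᵢ` and let every odd on the block be at most `ε` (here `ε = 1/(i_N^{(k)} - 1) → 0`).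
Double counting gives `∑ᵢ rᵢ e_b(s \ {i}) = (b + 1) e_{b+1}(s)`, and induction on `b` then yields
`∏_{j<b} (S - jε)⁺ ≤ b! e_b(s) ≤ S^b`; both sides tend to `λ^b`. For the product,
`1 - 1/i = (1 + rᵢ)⁻¹`, and `r - r²/2 ≤ log (1 + r) ≤ r` squeezes `∑ log (1 + rᵢ)` between
`(1 - ε) S` and `S`.
-/

section ElementarySymmetric

variable {ι R : Type*} [DecidableEq ι]

theorem sum_mul_sum_powersetCard_erase [CommSemiring R] (s : Finset ι) (r : ι → R) (b : ℕ) :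
    ∑ i ∈ s, r i * ∑ t ∈ (s.erase i).powersetCard b, ∏ j ∈ t, r j =
      (b + 1) * ∑ t ∈ s.powersetCard (b + 1), ∏ j ∈ t, r j := by
  have hcount : ∀ t ∈ s.powersetCard (b + 1),
      (b + 1 : R) * ∏ j ∈ t, r j = ∑ i ∈ t, r i * ∏ j ∈ t.erase i, r j := by
    intro t ht
    rw [sum_congr rfl fun i hi => mul_prod_erase t r hi, sum_const, (mem_powersetCard.1 ht).2,
      nsmul_eq_mul]
    push_cast
    ring
  simp_rw [mul_sum]
  rw [sum_congr rfl hcount, sum_sigma', sum_sigma']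
  refine sum_bij' (fun p _ => ⟨insert p.1 p.2, p.1⟩) (fun q _ => ⟨q.2, q.1.erase q.2⟩)
    ?_ ?_ ?_ ?_ ?_
  · rintro ⟨i, t⟩ h
    simp only [mem_sigma, mem_powersetCard, subset_erase] at h ⊢
    grind [card_insert_of_notMem, insert_subset]
  · rintro ⟨t, i⟩ h
    simp only [mem_sigma, mem_powersetCard] at h ⊢
    grind [card_erase_of_mem, erase_subset_erase]
  · rintro ⟨i, t⟩ h
    simp only [mem_sigma, mem_powersetCard, subset_erase] at h
    simp [erase_insert h.2.1.2]
  · rintro ⟨t, i⟩ h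
    simp [insert_erase (mem_sigma.1 h).2]
  · rintro ⟨i, t⟩ h
    simp only [mem_sigma, mem_powersetCard, subset_erase] at h
    simp [erase_insert h.2.1.2]

theorem factorial_mul_sum_powersetCard_prod_le_pow [CommSemiring R] [PartialOrder R]
    [IsOrderedRing R] (b : ℕ) {s : Finset ι} {r : ι → R} (hr : ∀ i ∈ s, 0 ≤ r i) :
    (b ! : R) * ∑ t ∈ s.powersetCard b, ∏ j ∈ t, r j ≤ (∑ i ∈ s, r i) ^ b := by
  induction b generalizing s with
  | zero => simp
  | succ b ih =>
    calc ((b + 1)! : R) * ∑ t ∈ s.powersetCard (b + 1), ∏ j ∈ t, r j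
        = ∑ i ∈ s, r i * ((b ! : R) * ∑ t ∈ (s.erase i).powersetCard b, ∏ j ∈ t, r j) := by
          simp_rw [mul_left_comm _ (b ! : R), ← mul_sum, sum_mul_sum_powersetCard_erase,
            Nat.factorial_succ]
          push_cast
          ring
      _ ≤ ∑ i ∈ s, r i * (∑ j ∈ s, r j) ^ b := by
          refine sum_le_sum fun i hi => mul_le_mul_of_nonneg_left ?_ (hr i hi)
          have hr' : ∀ j ∈ s.erase i, 0 ≤ r j := fun j hj => hr j (mem_of_mem_erase hj)
          exact (ih hr').trans (pow_le_pow_left₀ (sum_nonneg hr')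
            (sum_le_sum_of_subset_of_nonneg (erase_subset i s) fun j hj _ => hr j hj) b)
      _ = (∑ i ∈ s, r i) ^ (b + 1) := by rw [← sum_mul, pow_succ' (∑ i ∈ s, r i)]

theorem prod_max_sub_le_factorial_mul_sum_powersetCard_prod [CommRing R] [LinearOrder R]
    [IsStrictOrderedRing R] (b : ℕ) {s : Finset ι} {r : ι → R} {ε : R} (hr : ∀ i ∈ s, 0 ≤ r i)
    (hrε : ∀ i ∈ s, r i ≤ ε) :
    ∏ j ∈ range b, max (∑ i ∈ s, r i - j * ε) 0 ≤
      (b ! : R) * ∑ t ∈ s.powersetCard b, ∏ j ∈ t, r j := by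
  induction b generalizing s with
  | zero => simp
  | succ b ih =>
    set S := ∑ i ∈ s, r i
    calc ∏ j ∈ range (b + 1), max (S - j * ε) 0
        = ∑ i ∈ s, r i * ∏ j ∈ range b, max (S - (j + 1) * ε) 0 := by
          rw [prod_range_succ', ← sum_mul, Nat.cast_zero, zero_mul, sub_zero,
            max_eq_left (sum_nonneg hr), mul_comm]
          push_cast
          rfl
      _ ≤ ∑ i ∈ s, r i * ((b ! : R) * ∑ t ∈ (s.erase i).powersetCard b, ∏ j ∈ t, r j) := by
          refine sum_le_sum fun i hi => mul_le_mul_of_nonneg_left ?_ (hr i hi)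
          refine le_trans ?_ (ih (fun j hj => hr j (mem_of_mem_erase hj))
            fun j hj => hrε j (mem_of_mem_erase hj))
          refine prod_le_prod (fun j _ => le_max_right _ _) fun j _ => max_le_max_right 0 ?_
          have hS : r i + ∑ j ∈ s.erase i, r j = S := add_sum_erase s r hi
          linarith [hrε i hi]
      _ = ((b + 1)! : R) * ∑ t ∈ s.powersetCard (b + 1), ∏ j ∈ t, r j := by
          simp_rw [mul_left_comm _ (b ! : R), ← mul_sum, sum_mul_sum_powersetCard_erase,
            Nat.factorial_succ]
          push_cast
          ring

end ElementarySymmetric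

theorem Real.sub_sq_div_two_le_log_one_add {x : ℝ} (hx : 0 ≤ x) :
    x - x ^ 2 / 2 ≤ Real.log (1 + x) := by
  refine le_trans ?_ (Real.le_log_one_add_of_nonneg hx)
  rw [le_div_iff₀ (by linarith)]
  nlinarith [pow_nonneg hx 3]

section Limits

variable {α ι : Type*} {l : Filter α} {s : α → Finset ι} {r : ι → ℝ} {ε : α → ℝ} {lam : ℝ}

theorem tendsto_sum_log_one_add (hr : ∀ n, ∀ i ∈ s n, 0 ≤ r i)
    (hrε : ∀ n, ∀ i ∈ s n, r i ≤ ε n) (hε : Tendsto ε l (𝓝 0))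
    (hS : Tendsto (fun n => ∑ i ∈ s n, r i) l (𝓝 lam)) :
    Tendsto (fun n => ∑ i ∈ s n, Real.log (1 + r i)) l (𝓝 lam) := by
  have hlower : Tendsto (fun n => ∑ i ∈ s n, r i - ε n * ∑ i ∈ s n, r i) l (𝓝 lam) := by
    simpa using hS.sub (hε.mul hS)
  refine tendsto_of_tendsto_of_tendsto_of_le_of_le hlower hS (fun n => ?_) fun n =>
    sum_le_sum fun i hi => ?_
  · rw [mul_sum, ← sum_sub_distrib]
    refine sum_le_sum fun i hi => le_trans ?_ (Real.sub_sq_div_two_le_log_one_add (hr n i hi))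
    nlinarith [hr n i hi, hrε n i hi]
  · linarith [Real.log_le_sub_one_of_pos (by linarith [hr n i hi] : 0 < 1 + r i)]

theorem tendsto_sum_powersetCard_prod [l.NeBot] [DecidableEq ι] (hr : ∀ n, ∀ i ∈ s n, 0 ≤ r i)
    (hrε : ∀ n, ∀ i ∈ s n, r i ≤ ε n) (hε : Tendsto ε l (𝓝 0))
    (hS : Tendsto (fun n => ∑ i ∈ s n, r i) l (𝓝 lam)) (b : ℕ) :
    Tendsto (fun n => ∑ t ∈ (s n).powersetCard b, ∏ j ∈ t, r j) l (𝓝 (lam ^ b / b !)) := by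
  have hlam : 0 ≤ lam := ge_of_tendsto' hS fun n => sum_nonneg (hr n)
  have hfactor (j : ℕ) : Tendsto (fun n => max (∑ i ∈ s n, r i - j * ε n) 0) l (𝓝 lam) := by
    simpa [max_eq_left hlam] using
      (hS.sub (hε.const_mul (j : ℝ))).max (tendsto_const_nhds (x := (0 : ℝ)))
  have hb : (0 : ℝ) < b ! := by positivity
  refine tendsto_of_tendsto_of_tendsto_of_le_of_le
    (by simpa using (tendsto_finsetProd (range b) fun j _ => hfactor j).div_const (b ! : ℝ))
    ((hS.pow b).div_const (b ! : ℝ)) (fun n => ?_) fun n => ?_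
  · rw [div_le_iff₀' hb]
    exact prod_max_sub_le_factorial_mul_sum_powersetCard_prod b (hr n) (hrε n)
  · rw [le_div_iff₀' hb]
    exact factorial_mul_sum_powersetCard_prod_le_pow b (hr n)

end Limits

theorem Real.one_sub_one_div_eq_exp_neg_log {x : ℝ} (hx : 1 < x) :
    1 - 1 / x = Real.exp (-Real.log (1 + 1 / (x - 1))) := by
  have hx1 : 0 < x - 1 := sub_pos.2 hx
  rw [Real.exp_neg, Real.exp_log (by positivity)]
  field_simp
  ring

theorem secretary_block_limits_general (a c : ℕ → ℕ) (lam : ℝ)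
    (hac : ∀ N, 2 ≤ a N ∧ a N ≤ c N)
    (ha : Tendsto (fun N => (a N : ℝ)) atTop atTop)
    (hsum : Tendsto (fun N => ∑ i ∈ Finset.Ico (a N) (c N), (1 : ℝ) / ((i : ℝ) - 1))
      atTop (𝓝 lam)) :
    Tendsto (fun N => ∏ i ∈ Finset.Ico (a N) (c N), (1 - 1 / (i : ℝ))) atTop
        (𝓝 (Real.exp (-lam))) ∧
      ∀ m b : ℕ, 1 ≤ b → b ≤ m →
        Tendsto
          (fun N => ∑ s ∈ (Finset.Ico (a N) (c N)).powersetCard b,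
            ∏ i ∈ s, (1 : ℝ) / ((i : ℝ) - 1))
          atTop (𝓝 (lam ^ b / (Nat.factorial b : ℝ))) := by
  have hlt {N i : ℕ} (hi : i ∈ Ico (a N) (c N)) : 1 < (a N : ℝ) ∧ (a N : ℝ) ≤ i :=
    ⟨by exact_mod_cast (hac N).1, by exact_mod_cast (mem_Ico.1 hi).1⟩
  have hr (N : ℕ) : ∀ i ∈ Ico (a N) (c N), 0 ≤ (1 : ℝ) / ((i : ℝ) - 1) := fun i hi => by
    have := hlt hi
    exact one_div_nonneg.2 (by linarith)
  have hrε (N : ℕ) : ∀ i ∈ Ico (a N) (c N), (1 : ℝ) / ((i : ℝ) - 1) ≤ 1 / ((a N : ℝ) - 1) :=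
    fun i hi => by
      have := hlt hi
      exact one_div_le_one_div_of_le (by linarith) (by linarith)
  have hε : Tendsto (fun N => 1 / ((a N : ℝ) - 1)) atTop (𝓝 0) := by
    simpa only [one_div, ← sub_eq_add_neg, Pi.inv_def] using
      (tendsto_atTop_add_const_right _ (-1) ha).inv_tendsto_atTop
  refine ⟨?_, fun m b _ _ => tendsto_sum_powersetCard_prod hr hrε hε hsum b⟩
  have hq (N : ℕ) : ∏ i ∈ Ico (a N) (c N), (1 - 1 / (i : ℝ)) =
      Real.exp (-∑ i ∈ Ico (a N) (c N), Real.log (1 + 1 / ((i : ℝ) - 1))) := by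
    rw [← sum_neg_distrib, Real.exp_sum]
    exact prod_congr rfl fun i hi =>
      Real.one_sub_one_div_eq_exp_neg_log ((hlt hi).1.trans_le (hlt hi).2)
  simp_rw [hq]
  exact (tendsto_sum_log_one_add hr hrε hε hsum).neg.rexp

/-- Secretary-problem block asymptotics: with odds `r_i = 1/(i−1)` and failure
probabilities `q_i = 1 − 1/i`, if the block `B_k(N) = [i_N^{(k)}, i_N^{(k-1)})`
(given by endpoint sequences `a N = i_N^{(k)}` and `c N = i_N^{(k-1)}`) satisfies
`a N → ∞` and `∑_{i∈B_k(N)} r_i → λ_k > 0`, then `∏_{i∈B_k(N)} q_i → e^{-λ_k}`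
and for every `b ∈ {1,…,m}` the elementary symmetric polynomial `f^b` of the
odds over `B_k(N)` converges to `λ_k^b/b!`. -/
theorem secretary_block_limits (a c : ℕ → ℕ) (lam : ℝ) (hlam : 0 < lam)
    (hac : ∀ N, 2 ≤ a N ∧ a N ≤ c N)
    (ha : Tendsto (fun N => (a N : ℝ)) atTop atTop)
    (hsum : Tendsto (fun N => ∑ i ∈ Finset.Ico (a N) (c N), (1 : ℝ) / ((i : ℝ) - 1))
      atTop (𝓝 lam)) :
    Tendsto (fun N => ∏ i ∈ Finset.Ico (a N) (c N), (1 - 1 / (i : ℝ))) atTop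
        (𝓝 (Real.exp (-lam))) ∧
      ∀ m b : ℕ, 1 ≤ b → b ≤ m →
        Tendsto
          (fun N => ∑ s ∈ (Finset.Ico (a N) (c N)).powersetCard b,
            ∏ i ∈ s, (1 : ℝ) / ((i : ℝ) - 1))
          atTop (𝓝 (lam ^ b / (Nat.factorial b : ℝ))) :=
  secretary_block_limits_general a c lam hac ha hsum
end

section
/- For m = 2 the asymptotic optimal win probability and lower bound is e^{-1} + e^{-3/2}, and for m = 3 it is e^{-1} + e^{-3/2} + e^{-47/24}; numerically e^{-1} + e^{-3/2} > 0.59 and e^{-1} + e^{-3/2} + e^{-47/24} > 0.73. -/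
/-!
Enumerating `Ξ₁ = {(1)}`, `Ξ₂ = {(0,1), (2,0)}` and `Ξ₃ = {(0,0,1), (0,2,0), (3,0,0), (2,1,0)}`
turns the pattern equations into the triangular system `λ₁ = 1`, `λ₂ + λ₁²/2 = 1`,
`λ₃ + λ₂²/2 + λ₁³/6 + λ₁²λ₂/2 = 1`, whence `(λ₁, λ₂, λ₃) = (1, 1/2, 11/24)` and the partial sums
are `1, 3/2, 47/24`. The numerical bounds all follow from `e⁻¹ > 0.36787944116`, since
`e^{-3/2} = (e⁻³)^{1/2}` and `e^{-47/24} = e⁻² e^{1/24} ≥ e⁻² (1 + 1/24)`.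
-/

open Finset

lemma notMem_XiHat_zero (b : Fin 0 → ℕ) : b ∉ XiHat 0 := by simp [XiHat]

lemma mem_XiHat_one_iff (b : Fin 1 → ℕ) : b ∈ XiHat 1 ↔ b 0 = 1 := by
  simp only [XiHat, sumFrom, Set.mem_ofPred_eq, Fin.sum_univ_one, Fin.val_zero]
  constructor
  · rintro ⟨hb, hpos⟩
    have h1 := hb 1 le_rfl le_rfl
    split_ifs at h1 <;> omega
  · intro hb
    refine ⟨fun k' _ _ => ?_, by omega⟩
    split_ifs <;> omega

lemma mem_XiHat_two_iff (b : Fin 2 → ℕ) :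
    b ∈ XiHat 2 ↔ b 1 ≤ 1 ∧ b 0 + b 1 ≤ 2 ∧ 1 ≤ b 0 + b 1 := by
  simp only [XiHat, sumFrom, Set.mem_ofPred_eq, Fin.sum_univ_two, Fin.val_zero, Fin.val_one]
  constructor
  · rintro ⟨hb, hpos⟩
    have h1 := hb 1 le_rfl (by norm_num)
    have h2 := hb 2 (by norm_num) le_rfl
    split_ifs at h1 h2 <;> omega
  · intro hb
    refine ⟨fun k' _ _ => ?_, by omega⟩
    split_ifs <;> omega

lemma mem_XiHat_three_iff (b : Fin 3 → ℕ) :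
    b ∈ XiHat 3 ↔ b 2 ≤ 1 ∧ b 1 + b 2 ≤ 2 ∧ b 0 + b 1 + b 2 ≤ 3 ∧ 1 ≤ b 0 + b 1 + b 2 := by
  simp only [XiHat, sumFrom, Set.mem_ofPred_eq, Fin.sum_univ_three, Fin.val_zero, Fin.val_one,
    Fin.val_two]
  constructor
  · rintro ⟨hb, hpos⟩
    have h1 := hb 1 le_rfl (by norm_num)
    have h2 := hb 2 (by norm_num) (by norm_num)
    have h3 := hb 3 (by norm_num) le_rfl
    split_ifs at h1 h2 h3 <;> omega
  · intro hb
    refine ⟨fun k' _ _ => ?_, by omega⟩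
    split_ifs <;> omega

lemma Xi_one : Xi 1 = {![1]} := by
  ext b
  simp only [Xi, Set.mem_ofPred_eq, Nat.forall_lt_succ_right', Nat.not_lt_zero, IsEmpty.forall_iff,
    implies_true, notMem_XiHat_zero, not_false_eq_true, and_true, mem_XiHat_one_iff,
    Set.mem_singleton_iff, funext_iff, Fin.forall_fin_one, Matrix.cons_val_fin_one]

lemma Xi_two : Xi 2 = {![0, 1], ![2, 0]} := by
  ext b
  simp only [Xi, Set.mem_ofPred_eq, Nat.forall_lt_succ_right', Nat.not_lt_zero, IsEmpty.forall_iff,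
    implies_true, notMem_XiHat_zero, not_false_eq_true, true_and, mem_XiHat_one_iff,
    mem_XiHat_two_iff, Fin.castLE_zero, Set.mem_insert_iff, Set.mem_singleton_iff, funext_iff,
    Fin.forall_fin_two, Matrix.cons_val_zero, Matrix.cons_val_one, Matrix.cons_val_fin_one]
  omega

lemma Xi_three : Xi 3 = {![0, 0, 1], ![0, 2, 0], ![3, 0, 0], ![2, 1, 0]} := by
  ext b
  simp only [Xi, Set.mem_ofPred_eq, Nat.forall_lt_succ_right', Nat.not_lt_zero, IsEmpty.forall_iff,
    implies_true, notMem_XiHat_zero, not_false_eq_true, true_and, and_true, mem_XiHat_one_iff,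
    mem_XiHat_two_iff, mem_XiHat_three_iff, Fin.castLE, Fin.val_zero, Fin.val_one, Fin.zero_eta,
    Fin.mk_one, Set.mem_insert_iff, Set.mem_singleton_iff, funext_iff, Fin.forall_fin_succ,
    Fin.succ_zero_eq_one, Fin.succ_one_eq_two, Matrix.cons_val_zero, Matrix.cons_val_one,
    Matrix.cons_val_two, Matrix.tail_cons, Matrix.head_cons]
  omega

noncomputable def patternSum (lam : ℕ → ℝ) (k : ℕ) : ℝ :=
  ∑ᶠ b ∈ Xi k, ∏ j : Fin k, lam (j.val + 1) ^ (b j) / (Nat.factorial (b j))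

section patternSum

variable (lam : ℕ → ℝ)

lemma patternSum_one : patternSum lam 1 = lam 1 := by
  simp [patternSum, Xi_one]

lemma patternSum_two : patternSum lam 2 = lam 2 + lam 1 ^ 2 / 2 := by
  rw [patternSum, Xi_two, finsum_mem_pair (by decide)]
  simp [Fin.prod_univ_two]

lemma patternSum_three :
    patternSum lam 3 = lam 3 + lam 2 ^ 2 / 2 + lam 1 ^ 3 / 6 + lam 1 ^ 2 / 2 * lam 2 := by
  rw [patternSum, Xi_three, finsum_mem_insert _ (by simp) (by simp),
    finsum_mem_insert _ (by simp) (by simp), finsum_mem_pair (by decide)]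
  simp only [Fin.prod_univ_three, Fin.val_zero, Fin.val_one, Fin.val_two, Matrix.cons_val_zero,
    Matrix.cons_val_one, Matrix.cons_val_two, Matrix.tail_cons, Matrix.head_cons,
    Nat.factorial_succ, Nat.factorial_zero, Nat.reduceAdd, Nat.reduceMul]
  push_cast
  ring

end patternSum

lemma eqSystem_three_solution {lam : ℕ → ℝ} (h : eqSystem 3 lam) :
    lam 1 = 1 ∧ lam 2 = 1 / 2 ∧ lam 3 = 11 / 24 := by
  have e1 : patternSum lam 1 = 1 := h 1 le_rfl (by norm_num)
  have e2 : patternSum lam 2 = 1 := h 2 (by norm_num) (by norm_num)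
  have e3 : patternSum lam 3 = 1 := h 3 (by norm_num) le_rfl
  rw [patternSum_one] at e1
  rw [patternSum_two, e1] at e2
  have h2 : lam 2 = 1 / 2 := by linarith
  rw [patternSum_three, e1, h2] at e3
  exact ⟨e1, h2, by linarith⟩

namespace Real

lemma exp_neg_three_halves_gt : (0.22305 : ℝ) < exp (-(3 / 2)) := by
  have hsq : exp (-(3 / 2)) ^ 2 = exp (-1) ^ 3 := by
    rw [← exp_nat_mul, ← exp_nat_mul]; norm_num
  refine lt_of_pow_lt_pow_left₀ 2 (exp_pos _).le ?_
  rw [hsq]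
  calc (0.22305 : ℝ) ^ 2 < 0.36787944116 ^ 3 := by norm_num
    _ < exp (-1) ^ 3 := by gcongr; exact exp_neg_one_gt_d9

lemma exp_neg_47_div_24_gt : (0.1409 : ℝ) < exp (-(47 / 24)) := by
  have hsplit : exp (-(47 / 24)) = exp (-1) ^ 2 * exp (1 / 24) := by
    rw [← exp_nat_mul, ← exp_add]; norm_num
  rw [hsplit]
  calc (0.1409 : ℝ) < 0.36787944116 ^ 2 * (1 / 24 + 1) := by norm_num
    _ ≤ exp (-1) ^ 2 * exp (1 / 24) := by
      gcongr
      · exact exp_neg_one_gt_d9.le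
      · exact add_one_le_exp _

end Real

theorem asymptotic_values_two_three_general (lam : ℕ → ℝ) (h : eqSystem 3 lam) :
    (∑ k ∈ Finset.Icc 1 2, Real.exp (-(∑ k' ∈ Finset.Icc 1 k, lam k')))
        = Real.exp (-1) + Real.exp (-(3 / 2)) ∧
    (∑ k ∈ Finset.Icc 1 3, Real.exp (-(∑ k' ∈ Finset.Icc 1 k, lam k')))
        = Real.exp (-1) + Real.exp (-(3 / 2)) + Real.exp (-(47 / 24)) ∧
    (0.59 : ℝ) < Real.exp (-1) + Real.exp (-(3 / 2)) ∧
    (0.73 : ℝ) < Real.exp (-1) + Real.exp (-(3 / 2)) + Real.exp (-(47 / 24)) := by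
  obtain ⟨h1, h2, h3⟩ := eqSystem_three_solution h
  have b1 := Real.exp_neg_one_gt_d9
  have b2 := Real.exp_neg_three_halves_gt
  have b3 := Real.exp_neg_47_div_24_gt
  refine ⟨?_, ?_, by linarith, by linarith⟩ <;>
    norm_num [Finset.sum_Icc_succ_top, h1, h2, h3]

/-- For `m = 2` the asymptotic optimal win probability
`∑_{k=1}^2 e^{-∑_{k'≤k} λ_{k'}}` equals `e⁻¹ + e^{-3/2}`, and for `m = 3` it
equals `e⁻¹ + e^{-3/2} + e^{-47/24}`, where `(λ_1,λ_2,λ_3)` is the unique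
positive solution of the pattern equation system; numerically
`e⁻¹ + e^{-3/2} > 0.59` and `e⁻¹ + e^{-3/2} + e^{-47/24} > 0.73`. -/
theorem asymptotic_values_two_three (lam : ℕ → ℝ) (h : eqSystem 3 lam)
    (hpos : ∀ k, 1 ≤ k → k ≤ 3 → 0 < lam k) :
    (∑ k ∈ Finset.Icc 1 2, Real.exp (-(∑ k' ∈ Finset.Icc 1 k, lam k')))
        = Real.exp (-1) + Real.exp (-(3 / 2)) ∧
    (∑ k ∈ Finset.Icc 1 3, Real.exp (-(∑ k' ∈ Finset.Icc 1 k, lam k')))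
        = Real.exp (-1) + Real.exp (-(3 / 2)) + Real.exp (-(47 / 24)) ∧
    (0.59 : ℝ) < Real.exp (-1) + Real.exp (-(3 / 2)) ∧
    (0.73 : ℝ) < Real.exp (-1) + Real.exp (-(3 / 2)) + Real.exp (-(47 / 24)) :=
  asymptotic_values_two_three_general lam h
end
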